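/- arXiv:2512.02873 — 4 statements merged into one kernel-verified Lean document; each statement's English description precedes it below -/
import Mathlib

section
/- For an edge with overlapping obligations o₁, o₂ (possibly sharing variables in their domains), the semantics of the product-edge construction is preserved: a pair of consecutive valuations (v, v') satisfies the guard γ together with constraints ⟦o₁⟧(v) and ⟦o₂⟧(v) on v' if and only if v satisfies γ ∧ γ' and v' satisfies ⟦o'⟧(v), where γ' is the conjunction of equalities t₁ = t₂ over terms t₁, t₂ that o₁ and o₂ respectively assign to a common variable, and o' keeps from o₂ only the variables not in the domain of o₁. -/
abbrev Obligation (V D : Type) := V → Option ((V → D) → D)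

/-- `oblSat o v v'` : the valuation `v'` satisfies `⟦o⟧(v)`. -/
def oblSat {V D : Type} (o : Obligation V D) (v v' : V → D) : Prop :=
  ∀ x t, o x = some t → v' x = t v

/-- γ': on the overlap of the domains, the two assigned terms must agree at `v`. -/
def gammaPrime {V D : Type} (o₁ o₂ : Obligation V D) (v : V → D) : Prop :=
  ∀ x t₁ t₂, o₁ x = some t₁ → o₂ x = some t₂ → t₁ v = t₂ v

/-- o': `o₁` extended by the restriction of `o₂` to `dom(o₂) \ dom(o₁)`. -/
def oblProd {V D : Type} (o₁ o₂ : Obligation V D) : Obligation V D :=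
  fun x => (o₁ x).or (o₂ x)

theorem stmt1 (V D : Type) (γ : (V → D) → Prop) (o₁ o₂ : Obligation V D)
    (v v' : V → D) :
    (γ v ∧ oblSat o₁ v v' ∧ oblSat o₂ v v') ↔
      ((γ v ∧ gammaPrime o₁ o₂ v) ∧ oblSat (oblProd o₁ o₂) v v') := by
  constructor
  · rintro ⟨hγ, h1, h2⟩
    refine ⟨⟨hγ, ?_⟩, ?_⟩
    · intro x t₁ t₂ e1 e2
      rw [← h1 x t₁ e1, ← h2 x t₂ e2]
    · intro x t e
      unfold oblProd at e
      cases h : o₁ x with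
      | some t₁ => rw [h] at e; simp at e; rw [← e]; exact h1 x t₁ h
      | none => rw [h] at e; simp at e; exact h2 x t e
  · rintro ⟨⟨hγ, hgp⟩, hp⟩
    refine ⟨hγ, ?_, ?_⟩
    · intro x t e
      exact hp x t (by unfold oblProd; rw [e]; rfl)
    · intro x t e
      cases h : o₁ x with
      | some t₁ =>
        rw [hp x t₁ (by unfold oblProd; rw [h]; rfl)]
        exact hgp x t₁ t h e
      | none => exact hp x t (by unfold oblProd; rw [h, e]; rfl)
end

section
/- The product of obligations is semantically commutative: for all obligations o₁, o₂ and valuations v, v', the pair (v, v') satisfies the edge-semantics of o₁ × o₂ (guard γ' together with obligation o' as in the product construction) if and only if it satisfies the edge-semantics of o₂ × o₁. -/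
/-- Edge-semantics of a product `(γ', o')` on a pair of consecutive valuations. -/
def edgeSem {V D : Type} (o₁ o₂ : Obligation V D) (v v' : V → D) : Prop :=
  gammaPrime o₁ o₂ v ∧ oblSat (oblProd o₁ o₂) v v'

theorem stmt2 (V D : Type) (o₁ o₂ : Obligation V D) (v v' : V → D) :
    edgeSem o₁ o₂ v v' ↔ edgeSem o₂ o₁ v v' := by
  have key : ∀ a b : Obligation V D, edgeSem a b v v' → edgeSem b a v v' := by
    rintro a b ⟨hg, hs⟩
    refine ⟨fun x t₁ t₂ h1 h2 => (hg x t₂ t₁ h2 h1).symm, fun x t hx => ?_⟩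
    have hx' : (b x).or (a x) = some t := hx
    cases ha : a x with
    | none =>
      rw [ha, Option.or_none] at hx'
      exact hs x t (show (a x).or (b x) = some t by rw [ha, hx']; rfl)
    | some ta =>
      have hv : v' x = ta v := hs x ta (show (a x).or (b x) = some ta by rw [ha]; rfl)
      cases hb : b x with
      | none =>
        rw [hb, Option.none_or, ha] at hx'
        injection hx' with h; rw [hv, h]
      | some tb =>
        rw [hb] at hx'; simp only [Option.or] at hx'
        injection hx' with h; subst h; rw [hv]; exact hg x ta tb ha hb
  exact ⟨key o₁ o₂, key o₂ o₁⟩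
end

section
/- Let A₁ and A₂ be Büchi obligation automata over the same theory, with languages L₁ and L₂. Then the language of the product automaton A₁ ⊗ A₂ equals L₁ ∩ L₂. -/
/-- An edge of an obligation automaton. -/
structure Edge (V D Q : Type) where
  src : Q
  guard : (V → D) → Prop
  obl : Obligation V D
  tgt : Q

/-- A Büchi obligation automaton: edges, initial states, one acceptance set
with condition `Inf(1)`. -/
structure BOA (V D Q : Type) where
  edges : Set (Edge V D Q)
  init : Set Q
  acc : Set (Edge V D Q)

def IsRun {V D Q : Type} (A : BOA V D Q) (w : ℕ → V → D) (ρ : ℕ → Edge V D Q) : Prop :=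
  (∀ i, ρ i ∈ A.edges) ∧
  (ρ 0).src ∈ A.init ∧
  (∀ i, (ρ i).tgt = (ρ (i+1)).src) ∧
  (∀ i, (ρ i).guard (w i)) ∧
  (∀ i, oblSat (ρ i).obl (w i) (w (i+1)))

/-- `L(A)`: words having a run taking accepting edges infinitely often. -/
def Lang {V D Q : Type} (A : BOA V D Q) : Set (ℕ → V → D) :=
  { w | ∃ ρ, IsRun A w ρ ∧ {i | ρ i ∈ A.acc}.Infinite }

/-- A run of the product automaton `A₁ ⊗ A₂`, represented as a sequence of
pairs of edges: conjoined guards plus `γ'`, product obligations. -/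
def ProdRun {V D Q₁ Q₂ : Type} (A₁ : BOA V D Q₁) (A₂ : BOA V D Q₂)
    (w : ℕ → V → D) (ρ : ℕ → Edge V D Q₁ × Edge V D Q₂) : Prop :=
  (∀ i, (ρ i).1 ∈ A₁.edges ∧ (ρ i).2 ∈ A₂.edges) ∧
  ((ρ 0).1.src ∈ A₁.init ∧ (ρ 0).2.src ∈ A₂.init) ∧
  (∀ i, (ρ i).1.tgt = (ρ (i+1)).1.src ∧ (ρ i).2.tgt = (ρ (i+1)).2.src) ∧
  (∀ i, (ρ i).1.guard (w i) ∧ (ρ i).2.guard (w i) ∧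
        gammaPrime (ρ i).1.obl (ρ i).2.obl (w i)) ∧
  (∀ i, oblSat (oblProd (ρ i).1.obl (ρ i).2.obl) (w i) (w (i+1)))

/-- `L(A₁ ⊗ A₂)`: the product acceptance condition is the conjunction of the
two lifted Büchi conditions. -/
def ProdLang {V D Q₁ Q₂ : Type} (A₁ : BOA V D Q₁) (A₂ : BOA V D Q₂) :
    Set (ℕ → V → D) :=
  { w | ∃ ρ, ProdRun A₁ A₂ w ρ ∧
        {i | (ρ i).1 ∈ A₁.acc}.Infinite ∧ {i | (ρ i).2 ∈ A₂.acc}.Infinite }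

theorem stmt3 (V D Q₁ Q₂ : Type) (A₁ : BOA V D Q₁) (A₂ : BOA V D Q₂) :
    ProdLang A₁ A₂ = Lang A₁ ∩ Lang A₂ := by
  ext w
  constructor
  · rintro ⟨ρ, ⟨he, hi, ht, hg, ho⟩, h1, h2⟩
    constructor
    · refine ⟨fun i => (ρ i).1, ⟨fun i => (he i).1, hi.1, fun i => (ht i).1,
        fun i => (hg i).1, fun i x t h => ?_⟩, h1⟩
      exact ho i x t (by simp [oblProd, h, Option.or])
    · refine ⟨fun i => (ρ i).2, ⟨fun i => (he i).2, hi.2, fun i => (ht i).2,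
        fun i => (hg i).2.1, fun i x t h => ?_⟩, h2⟩
      cases h1 : (ρ i).1.obl x with
      | none => exact ho i x t (by simp [oblProd, h1, h, Option.or])
      | some t1 =>
        have := ho i x t1 (by simp [oblProd, h1, Option.or])
        rw [this]
        exact (hg i).2.2 x t1 t h1 h
  · rintro ⟨⟨ρ1, ⟨he1, hi1, ht1, hg1, ho1⟩, h1⟩, ⟨ρ2, ⟨he2, hi2, ht2, hg2, ho2⟩, h2⟩⟩
    refine ⟨fun i => (ρ1 i, ρ2 i), ⟨fun i => ⟨he1 i, he2 i⟩, ⟨hi1, hi2⟩,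
      fun i => ⟨ht1 i, ht2 i⟩,
      fun i => ⟨hg1 i, hg2 i, fun x t1 t2 hx1 hx2 => ?_⟩,
      fun i x t h => ?_⟩, h1, h2⟩
    · rw [← ho1 i x t1 hx1, ← ho2 i x t2 hx2]
    · simp only [oblProd] at h
      cases hx1 : (ρ1 i).obl x with
      | none => rw [hx1, Option.none_or] at h; exact ho2 i x t h
      | some t1 => rw [hx1] at h; simp only [Option.or] at h; cases h; exact ho1 i x t hx1
end

section
/- The nondeterministic Büchi obligation automaton of Figure 2a recognises exactly Nonce_x^c, the set of infinite sequences of integer valuations over variables x, y in which some value of x occurs at two distinct positions (i.e., ∃ i < j with v_i(x) = v_j(x)). -/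
/-- Transition relation of the nondeterministic Büchi obligation automaton of
Figure 2a. A valuation is a pair `(x, y) : ℤ × ℤ`. `tr q v v' q'` holds iff
there is an edge from `q` to `q'` whose guard is satisfied by the current
valuation `v` and whose obligation is satisfied by the next valuation `v'`.
States: 0 = p₀ (initial), 1 = p₁, 2 = p₂ (accepting sink). -/
def tr (q : Fin 3) (v v' : ℤ × ℤ) (q' : Fin 3) : Prop :=
  (q = 0 ∧ q' = 1 ∧ v'.2 = v.1) ∨
  (q = 1 ∧ q' = 1 ∧ v.1 ≠ v.2 ∧ (v'.2 = v.1 ∨ v'.2 = v.2)) ∨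
  (q = 1 ∧ q' = 2 ∧ v.1 = v.2) ∨
  (q = 2 ∧ q' = 2)

/-- The automaton of Figure 2a recognises exactly `Nonce_x^c`: there is a word
with the given `x`-components admitting an accepting run (the `y`-components
being chosen along the run) iff some value of `x` occurs at two distinct
positions. -/
theorem stmt10 (xs : ℕ → ℤ) :
    (∃ w : ℕ → ℤ × ℤ, (∀ i, (w i).1 = xs i) ∧
      ∃ σ : ℕ → Fin 3, σ 0 = 0 ∧
        (∀ i, tr (σ i) (w i) (w (i+1)) (σ (i+1))) ∧
        {i | σ i = 2}.Infinite) ↔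
    ∃ i j : ℕ, i < j ∧ xs i = xs j := by
  constructor
  · rintro ⟨w, hw, σ, hσ0, htr, hinf⟩
    -- in state 1, y holds a past value of x
    have key : ∀ k, σ k = 1 → ∃ t, t < k ∧ (w k).2 = xs t := by
      intro k
      induction k with
      | zero => intro h; rw [hσ0] at h; exact absurd h (by decide)
      | succ k ih =>
        intro h
        rcases htr k with ⟨_, _, hy⟩ | ⟨hq, _, _, hy⟩ | ⟨_, h2, _⟩ | ⟨_, h2⟩
        · exact ⟨k, Nat.lt_succ_self k, by rw [hy, hw]⟩
        · rcases hy with hy | hy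
          · exact ⟨k, Nat.lt_succ_self k, by rw [hy, hw]⟩
          · obtain ⟨t, ht, he⟩ := ih hq
            exact ⟨t, ht.trans (Nat.lt_succ_self k), by rw [hy, he]⟩
        · rw [h2] at h; exact absurd h (by decide)
        · rw [h2] at h; exact absurd h (by decide)
    have hex : ∃ m, σ m = 2 := hinf.nonempty
    have hσm : σ (Nat.find hex) = 2 := Nat.find_spec hex
    have hm1 : Nat.find hex ≠ 0 := by
      intro h; rw [h, hσ0] at hσm; exact absurd hσm (by decide)
    obtain ⟨n, hn⟩ := Nat.exists_eq_succ_of_ne_zero hm1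
    rw [hn] at hσm
    have hσn : σ n ≠ 2 := Nat.find_min hex (by omega)
    rcases htr n with ⟨_, h2, _⟩ | ⟨_, h2, _, _⟩ | ⟨hq, _, hxy⟩ | ⟨h2, _⟩
    · rw [h2] at hσm; exact absurd hσm (by decide)
    · rw [h2] at hσm; exact absurd hσm (by decide)
    · obtain ⟨t, ht, he⟩ := key n hq
      exact ⟨t, n, ht, by rw [← he, ← hw n, hxy]⟩
    · exact absurd h2 hσn
  · rintro ⟨i, j, hij, hx⟩
    have hex : ∃ j, ∃ i, i < j ∧ xs i = xs j := ⟨j, i, hij, hx⟩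
    set J := Nat.find hex with hJ
    obtain ⟨I, hIJ, hxIJ⟩ := Nat.find_spec hex
    have hdist : ∀ a b, a < b → b < J → xs a ≠ xs b := by
      intro a b hab hbJ he
      exact Nat.find_min hex hbJ ⟨a, hab, he⟩
    have hJ1 : 1 ≤ J := Nat.one_le_iff_ne_zero.mpr (by omega)
    refine ⟨fun k => (xs k, if k = 0 then 0 else xs (min (k-1) I)), fun i => rfl,
      fun k => if k = 0 then 0 else if k ≤ J then 1 else 2, by simp, ?_, ?_⟩
    · intro k
      rcases Nat.eq_zero_or_pos k with rfl | hk
      · left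
        refine ⟨by simp, by simp [hJ1], ?_⟩
        simp
      · by_cases hkJ : k < J
        · right; left
          have hk1 : k ≠ 0 := by omega
          refine ⟨by simp [hk1, hkJ.le], by simp [(show k + 1 ≤ J by omega), (show k + 1 ≠ 0 by omega)], ?_, ?_⟩
          · simp only [hk1, if_false]
            exact fun h => hdist _ _ (by omega) hkJ h.symm
          · simp only [hk1, if_false, (show k + 1 ≠ 0 by omega), if_false]
            rcases le_or_gt k I with h | h
            · left; congr 1; omega
            · right; congr 1; omega
        · by_cases hkJ2 : k = J
          · right; right; left
            refine ⟨by simp [(show k ≠ 0 by omega), hkJ2.le], by simp [(show k + 1 ≠ 0 by omega), (show ¬ k + 1 ≤ J by omega)], ?_⟩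
            simp only [(show k ≠ 0 by omega), if_false]
            rw [(show (k-1) ⊓ I = I by omega), hxIJ, ← hJ, ← hkJ2]
          · right; right; right
            constructor <;> simp [(show k ≠ 0 by omega), (show ¬ k ≤ J by omega), (show k + 1 ≠ 0 by omega),
              (show ¬ k + 1 ≤ J by omega)]
    · apply Set.Infinite.mono (s := Set.Ioi J)
      · intro k hk
        simp only [Set.mem_Ioi] at hk
        simp [Set.mem_setOf_eq, (show k ≠ 0 by omega), (show ¬ k ≤ J by omega)]
      · exact Set.Ioi_infinite J
end
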